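/- Let X ∈ ℝ^{d_in×n}, W ∈ ℝ^{d_out×d_in}, and r ∈ ℕ. Then the infimum over matrices W̃ ∈ ℝ^{d_out×d_in} with rank(W̃) ≤ r of ‖WX − W̃X‖_F equals the infimum over matrices M ∈ ℝ^{d_out×n} with rank(M) ≤ r of ‖WX − M‖_F. -/

import Mathlib

open scoped BigOperators

namespace CoLA

noncomputable section

/-- Frobenius norm of a real matrix. -/
def frobNorm {m n : ℕ} (M : Matrix (Fin m) (Fin n) ℝ) : ℝ :=
  Real.sqrt (∑ i, ∑ j, (M i j) ^ 2)

/-- Entrywise application of `σ` to a matrix. -/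
def entrywise (σ : ℝ → ℝ) {m n : ℕ} (M : Matrix (Fin m) (Fin n) ℝ) :
    Matrix (Fin m) (Fin n) ℝ :=
  Matrix.of fun i j => σ (M i j)

/-- `E_σ(r)`. -/
def Esig (σ : ℝ → ℝ) {din dout n : ℕ} (X : Matrix (Fin din) (Fin n) ℝ)
    (Y : Matrix (Fin dout) (Fin n) ℝ) (r : ℕ) : ℝ :=
  ⨅ (A : Matrix (Fin r) (Fin din) ℝ), ⨅ (B : Matrix (Fin dout) (Fin r) ℝ),
    frobNorm (Y - B * entrywise σ (A * X))

/-- `E_id(r)`. -/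
def Eid {din dout n : ℕ} (X : Matrix (Fin din) (Fin n) ℝ)
    (Y : Matrix (Fin dout) (Fin n) ℝ) (r : ℕ) : ℝ :=
  ⨅ (A : Matrix (Fin r) (Fin din) ℝ), ⨅ (B : Matrix (Fin dout) (Fin r) ℝ),
    frobNorm (Y - B * A * X)

/-- The (unsorted) singular values of `M`: square roots of eigenvalues of `Mᴴ * M`. -/
def svAux {m n : ℕ} (M : Matrix (Fin m) (Fin n) ℝ) : Fin n → ℝ :=
  fun i => Real.sqrt ((show (Matrix.transpose M * M).IsHermitian by
    have h := Matrix.isHermitian_conjTranspose_mul_self M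
    rwa [Matrix.conjTranspose_eq_transpose_of_trivial] at h).eigenvalues i)

/-- Singular values of `M` sorted in non-increasing order (0-indexed). -/
def sv {m n : ℕ} (M : Matrix (Fin m) (Fin n) ℝ) : Fin n → ℝ :=
  fun i => svAux M (Tuple.sort (fun j => -(svAux M j)) i)

/-- `k`-th largest singular value (1-indexed, `0` for `k > n`). -/
def sVal {m n : ℕ} (M : Matrix (Fin m) (Fin n) ℝ) (k : ℕ) : ℝ :=
  if h : k - 1 < n then sv M ⟨k - 1, h⟩ else 0

/-- `s_{>k}(M) = √(∑_{j>k} s_j(M)²)` (with `j` 1-indexed). -/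
def sGt {m n : ℕ} (M : Matrix (Fin m) (Fin n) ℝ) (k : ℕ) : ℝ :=
  Real.sqrt (∑ j : Fin n, if k ≤ (j : ℕ) then (sv M j) ^ 2 else 0)

/-- Spectral (ℓ²-operator) norm of a real matrix. -/
def specNorm {m n : ℕ} (M : Matrix (Fin m) (Fin n) ℝ) : ℝ :=
  ‖LinearMap.toContinuousLinearMap (Matrix.toEuclideanLin M)‖

/-- Effective rank `r_α(M)`: the least `k` with `∑_{i≤k} s_i² ≥ α ∑_i s_i²`. -/
def effRank {m n : ℕ} (M : Matrix (Fin m) (Fin n) ℝ) (α : ℝ) : ℕ :=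
  sInf {k : ℕ |
    α * ∑ i : Fin n, (sv M i) ^ 2 ≤ ∑ i : Fin n, if (i : ℕ) < k then (sv M i) ^ 2 else 0}

/-- Row space of `X` inside `Fin n → ℝ`. -/
def rowSpace {d n : ℕ} (X : Matrix (Fin d) (Fin n) ℝ) : Submodule ℝ (Fin n → ℝ) :=
  Submodule.span ℝ (Set.range X)

/-- Row space of `X` as a submodule of Euclidean space. -/
def rowSpaceE {d n : ℕ} (X : Matrix (Fin d) (Fin n) ℝ) :
    Submodule ℝ (EuclideanSpace ℝ (Fin n)) :=
  Submodule.span ℝ (Set.range fun i => (WithLp.equiv 2 (Fin n → ℝ)).symm (X i))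

/-- Row-wise orthogonal projection of the rows of `Y` onto the subspace `S`. -/
def projRows {dout n : ℕ} (S : Submodule ℝ (EuclideanSpace ℝ (Fin n)))
    (Y : Matrix (Fin dout) (Fin n) ℝ) : Matrix (Fin dout) (Fin n) ℝ :=
  Matrix.of fun i => WithLp.equiv 2 (Fin n → ℝ)
    ((S.orthogonalProjectionOnto ((WithLp.equiv 2 (Fin n → ℝ)).symm (Y i)) :
      EuclideanSpace ℝ (Fin n)))

/-- Row-wise orthogonal projection onto the orthogonal complement of `span{v}`. -/
def projVperp {dout n : ℕ} (v : Fin n → ℝ) (Y : Matrix (Fin dout) (Fin n) ℝ) :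
    Matrix (Fin dout) (Fin n) ℝ :=
  projRows (Submodule.span ℝ {(WithLp.equiv 2 (Fin n → ℝ)).symm v})ᗮ Y


/-!
Projecting the rows of a competitor `M` orthogonally onto the row space of `X` is right
multiplication by a matrix of the form `Q * X`. Hence it turns `M` into `(M * Q) * X`, of rank at
most `rank M`; it fixes the rows of `W * X` and shrinks every row, so `(M * Q) * X` is at least as
close to `W * X` as `M`. The converse inequality holds because `rank (W̃ * X) ≤ rank W̃`.
-/

open Matrix Submodule

theorem _root_.Matrix.exists_vecMul_mul_eq_of_range_le {R ι κ : Type*} [CommSemiring R] [Fintype ι]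
    [Fintype κ] [DecidableEq ι] (X : Matrix κ ι R) (f : (ι → R) →ₗ[R] ι → R)
    (hf : LinearMap.range f ≤ span R (Set.range X)) :
    ∃ Q : Matrix ι κ R, ∀ v, v ᵥ* (Q * X) = f v := by
  have hrow (j : ι) : ∃ q, q ᵥ* X = f (Pi.single j 1) := by
    have hj : f (Pi.single j 1) ∈ span R (Set.range X.row) := hf ⟨_, rfl⟩
    rwa [← range_vecMulLinear] at hj
  choose Q hQ using hrow
  suffices (Matrix.of Q * X).vecMulLinear = f from ⟨Matrix.of Q, LinearMap.congr_fun this⟩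
  refine (Pi.basisFun R ι).ext fun j => ?_
  rw [Pi.basisFun_apply, vecMulLinear_apply, single_vecMul, one_smul, ← hQ]
  rfl

theorem exists_projRows_rowSpaceE_eq_mul {d n : ℕ} (X : Matrix (Fin d) (Fin n) ℝ) :
    ∃ Q : Matrix (Fin n) (Fin d) ℝ,
      ∀ {m : ℕ} (Y : Matrix (Fin m) (Fin n) ℝ), projRows (rowSpaceE X) Y = Y * (Q * X) := by
  let e := WithLp.linearEquiv 2 ℝ (Fin n → ℝ)
  let f := e.toLinearMap ∘ₗ (rowSpaceE X).starProjection.toLinearMap ∘ₗ e.symm.toLinearMap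
  have hS : (rowSpaceE X).map e.toLinearMap = span ℝ (Set.range X) := by
    rw [rowSpaceE, map_span, ← Set.range_comp]
    rfl
  have hf : LinearMap.range f ≤ span ℝ (Set.range X) := by
    rintro _ ⟨v, rfl⟩
    exact hS ▸ mem_map_of_mem ((rowSpaceE X).starProjection_apply_mem (e.symm v))
  obtain ⟨Q, hQ⟩ := X.exists_vecMul_mul_eq_of_range_le f hf
  refine ⟨Q, fun Y => ?_⟩
  ext i : 1
  rw [mul_apply_eq_vecMul, hQ]
  rfl

theorem projRows_rowSpaceE_self {d n : ℕ} (X : Matrix (Fin d) (Fin n) ℝ) :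
    projRows (rowSpaceE X) X = X := by
  ext i : 1
  have hi : WithLp.toLp 2 (X i) ∈ rowSpaceE X := subset_span ⟨i, rfl⟩
  simp [projRows, starProjection_eq_self_iff.2 hi]

theorem frobNorm_nonneg {m n : ℕ} (Z : Matrix (Fin m) (Fin n) ℝ) : 0 ≤ frobNorm Z :=
  Real.sqrt_nonneg _

theorem frobNorm_eq_sqrt_sum_norm_sq {m n : ℕ} (Z : Matrix (Fin m) (Fin n) ℝ) :
    frobNorm Z = √(∑ i, ‖WithLp.toLp 2 (Z i)‖ ^ 2) := by
  simp only [frobNorm, EuclideanSpace.norm_sq_eq, Real.norm_eq_abs, sq_abs]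

theorem frobNorm_projRows_le {m n : ℕ} (S : Submodule ℝ (EuclideanSpace ℝ (Fin n)))
    (Y : Matrix (Fin m) (Fin n) ℝ) : frobNorm (projRows S Y) ≤ frobNorm Y := by
  rw [frobNorm_eq_sqrt_sum_norm_sq, frobNorm_eq_sqrt_sum_norm_sq]
  gcongr with i
  exact S.norm_starProjection_apply_le _

theorem exists_rank_le_frobNorm_sub_mul_le {din dout n : ℕ} (X : Matrix (Fin din) (Fin n) ℝ)
    (W : Matrix (Fin dout) (Fin din) ℝ) (M : Matrix (Fin dout) (Fin n) ℝ) :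
    ∃ Wt : Matrix (Fin dout) (Fin din) ℝ, Wt.rank ≤ M.rank ∧
      frobNorm (W * X - Wt * X) ≤ frobNorm (W * X - M) := by
  obtain ⟨Q, hQ⟩ := exists_projRows_rowSpaceE_eq_mul X
  have hX : X * (Q * X) = X := (hQ X).symm.trans (projRows_rowSpaceE_self X)
  refine ⟨M * Q, rank_mul_le_left _ _, ?_⟩
  calc frobNorm (W * X - M * Q * X)
      = frobNorm (projRows (rowSpaceE X) (W * X - M)) := by
        rw [hQ, Matrix.sub_mul, Matrix.mul_assoc W, hX, Matrix.mul_assoc M]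
    _ ≤ frobNorm (W * X - M) := frobNorm_projRows_le _ _

/-- step in the proof of Lemma 3: the best rank-`≤ r`
approximation error of `WX` among matrices of the form `W̃X` equals the best
rank-`≤ r` approximation error of `WX` among all matrices. -/
theorem stmt14 {din dout n : ℕ} (X : Matrix (Fin din) (Fin n) ℝ)
    (W : Matrix (Fin dout) (Fin din) ℝ) (r : ℕ) :
    (⨅ Wt : {Wt : Matrix (Fin dout) (Fin din) ℝ // Wt.rank ≤ r},
        frobNorm (W * X - Wt.1 * X)) =
      ⨅ M : {M : Matrix (Fin dout) (Fin n) ℝ // M.rank ≤ r},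
        frobNorm (W * X - M.1) := by
  have hzero {a b : ℕ} : (0 : Matrix (Fin a) (Fin b) ℝ).rank ≤ r := by simp
  have hbdd {ι : Type} {a b : ℕ} (Z : ι → Matrix (Fin a) (Fin b) ℝ) :
      BddBelow (Set.range fun i => frobNorm (Z i)) :=
    ⟨0, Set.forall_mem_range.2 fun _ => frobNorm_nonneg _⟩
  apply le_antisymm
  · have : Nonempty {M : Matrix (Fin dout) (Fin n) ℝ // M.rank ≤ r} := ⟨⟨0, hzero⟩⟩
    refine le_ciInf fun M => ?_
    obtain ⟨Wt, hrank, hle⟩ := exists_rank_le_frobNorm_sub_mul_le X W M.1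
    exact ciInf_le_of_le (hbdd _) ⟨Wt, hrank.trans M.2⟩ hle
  · have : Nonempty {Wt : Matrix (Fin dout) (Fin din) ℝ // Wt.rank ≤ r} := ⟨⟨0, hzero⟩⟩
    refine le_ciInf fun Wt => ?_
    exact ciInf_le_of_le (hbdd _) ⟨Wt.1 * X, (rank_mul_le_left _ _).trans Wt.2⟩ le_rfl

end

end CoLA
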